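/- Assume ∑_{i≥1}|ω_i|² < ∞. Then for every multi-index ν there is a constant C ≥ 0 such that for every positive integer k: ∑_η (η_k + 1)·|v_{η+δ_k, ν}(ω)|² ≤ C, where δ_k denotes the multi-index that is 1 at k and 0 elsewhere, and the sum is over all multi-indices η. (Equivalently, the annihilation operators a_k satisfy ‖a_k V(ω) e_ν‖ ≤ C^{1/2}·k^{1/2} uniformly in k.) -/
import Mathlib


/-- A multi-index: a finitely supported function from the positive integers to `ℕ`. -/
abbrev MultiIndex := ℕ+ →₀ ℕ

/-- The polynomial `m_{n,m}(x,y) = ∑_{j=0}^{min(n,m)} (n choose j)(m choose j) j! x^{n-j} y^{m-j}`. -/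
def mPoly {R : Type*} [CommSemiring R] (n m : ℕ) (x y : R) : R :=
  ∑ j ∈ Finset.range (min n m + 1),
    (n.choose j : R) * (m.choose j : R) * (Nat.factorial j : R) * x ^ (n - j) * y ^ (m - j)

/-- `η! = ∏_{i≥1} η_i!`. -/
def miFact (η : MultiIndex) : ℕ := ∏ i ∈ η.support, Nat.factorial (η i)

/-- The matrix element `v_{η,ν}(ω) = (η!·ν!)^{-1/2} ∏_{i≥1} m_{η_i,ν_i}(ω_i, -ω_{-i})`;
the product is finite since `m_{0,0} = 1`. -/
noncomputable def vElem (ωp ωm : ℕ+ → ℂ) (η ν : MultiIndex) : ℂ :=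
  ((1 / Real.sqrt ((miFact η : ℝ) * (miFact ν : ℝ))) : ℝ) *
    ∏ i ∈ η.support ∪ ν.support, mPoly (η i) (ν i) (ωp i) (-ωm i)

open Finset

lemma mPoly_zero_zero {R : Type*} [CommSemiring R] (x y : R) : mPoly 0 0 x y = 1 := by
  simp [mPoly]

lemma mPoly_zero_right {R : Type*} [CommSemiring R] (n : ℕ) (x y : R) :
    mPoly n 0 x y = x ^ n := by
  simp [mPoly]

lemma mPoly_norm_le (n m : ℕ) (x y : ℂ) {M : ℝ} (hx : ‖x‖ ≤ M) (hy : ‖y‖ ≤ M)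
    (hM : 1 ≤ M) : ‖mPoly n m x y‖ ≤ 2 ^ n * m.factorial * M ^ (n + m) := by
  have hM0 : (0:ℝ) ≤ M := le_trans zero_le_one hM
  calc ‖mPoly n m x y‖
      ≤ ∑ j ∈ Finset.range (min n m + 1),
          ‖(n.choose j : ℂ) * (m.choose j : ℂ) * (Nat.factorial j : ℂ) * x ^ (n - j) * y ^ (m - j)‖ :=
        norm_sum_le _ _
    _ ≤ ∑ j ∈ Finset.range (min n m + 1), (n.choose j : ℝ) * (m.factorial * M ^ (n + m)) := by
        refine Finset.sum_le_sum fun j hj => ?_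
        have hjm : j ≤ m := le_trans (Nat.lt_succ_iff.mp (Finset.mem_range.mp hj)) (min_le_right _ _)
        have h1 : ‖(n.choose j : ℂ) * (m.choose j : ℂ) * (Nat.factorial j : ℂ) * x ^ (n - j) * y ^ (m - j)‖
            = (n.choose j : ℝ) * ((m.choose j : ℝ) * (Nat.factorial j : ℝ)) * (‖x‖ ^ (n - j) * ‖y‖ ^ (m - j)) := by
          simp [norm_mul, norm_pow]
          ring
        rw [h1]
        have h2 : (m.choose j : ℝ) * (Nat.factorial j : ℝ) ≤ (m.factorial : ℝ) := by
          have := Nat.choose_mul_factorial_mul_factorial hjm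
          have h3 : m.choose j * j.factorial ≤ m.factorial := by
            calc m.choose j * j.factorial ≤ m.choose j * j.factorial * (m - j).factorial :=
              Nat.le_mul_of_pos_right _ (Nat.factorial_pos _)
            _ = m.factorial := this
          exact_mod_cast h3
        have h4 : ‖x‖ ^ (n - j) * ‖y‖ ^ (m - j) ≤ M ^ (n + m) := by
          calc ‖x‖ ^ (n - j) * ‖y‖ ^ (m - j) ≤ M ^ (n - j) * M ^ (m - j) := by
                gcongr <;> assumption
            _ = M ^ (n - j + (m - j)) := (pow_add M _ _).symm
            _ ≤ M ^ (n + m) := pow_le_pow_right₀ hM (by omega)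
        calc (n.choose j : ℝ) * ((m.choose j : ℝ) * (Nat.factorial j : ℝ)) * (‖x‖ ^ (n - j) * ‖y‖ ^ (m - j))
            ≤ (n.choose j : ℝ) * (m.factorial : ℝ) * M ^ (n + m) := by
              apply mul_le_mul (mul_le_mul_of_nonneg_left h2 (by positivity)) h4 (by positivity) (by positivity)
          _ = (n.choose j : ℝ) * ((m.factorial : ℝ) * M ^ (n + m)) := by ring
    _ = (∑ j ∈ Finset.range (min n m + 1), (n.choose j : ℝ)) * (m.factorial * M ^ (n + m)) := by
        rw [Finset.sum_mul]
    _ ≤ (2 ^ n : ℝ) * (m.factorial * M ^ (n + m)) := by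
        gcongr
        have hsub : Finset.range (min n m + 1) ⊆ Finset.range (n + 1) := by
          apply Finset.range_subset_range.mpr; omega
        calc (∑ j ∈ Finset.range (min n m + 1), (n.choose j : ℝ))
            ≤ ∑ j ∈ Finset.range (n + 1), (n.choose j : ℝ) :=
              Finset.sum_le_sum_of_subset_of_nonneg hsub (by intro i _ _; positivity)
          _ = (2:ℝ) ^ n := by exact_mod_cast congrArg (Nat.cast : ℕ → ℝ) (Nat.sum_range_choose n)
    _ = 2 ^ n * m.factorial * M ^ (n + m) := by ring

/-- Uniform bound for the per-index partial sums, valid with or without the shift `ε`. -/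
lemma g_sum_le (m : ℕ) (x y : ℂ) (ε : ℕ) (hε : ε ≤ 1) (N : ℕ) :
    ∑ n ∈ Finset.range N, ‖mPoly (n + ε) m x y‖ ^ 2 / (n.factorial : ℝ) ≤
      4 * (m.factorial : ℝ) ^ 2 * (max (max ‖x‖ ‖y‖) 1) ^ (2 * (1 + m)) *
        Real.exp (4 * (max (max ‖x‖ ‖y‖) 1) ^ 2) := by
  set M : ℝ := max (max ‖x‖ ‖y‖) 1 with hMdef
  have hM : 1 ≤ M := le_max_right _ _
  have hM0 : (0:ℝ) ≤ M := le_trans zero_le_one hM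
  set C : ℝ := 4 * (m.factorial : ℝ) ^ 2 * M ^ (2 * (1 + m)) with hCdef
  have hC0 : 0 ≤ C := by positivity
  have key : ∀ n : ℕ, ‖mPoly (n + ε) m x y‖ ^ 2 / (n.factorial : ℝ) ≤
      C * ((4 * M ^ 2) ^ n / (n.factorial : ℝ)) := by
    intro n
    have h1 : ‖mPoly (n + ε) m x y‖ ≤ 2 ^ (n + 1) * m.factorial * M ^ (n + 1 + m) := by
      calc ‖mPoly (n + ε) m x y‖ ≤ 2 ^ (n + ε) * m.factorial * M ^ (n + ε + m) :=
            mPoly_norm_le _ _ _ _ (le_max_of_le_left (le_max_left _ _))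
              (le_max_of_le_left (le_max_right _ _)) hM
        _ ≤ 2 ^ (n + 1) * m.factorial * M ^ (n + 1 + m) := by
            gcongr <;> first | exact hM | norm_num | omega
    have h2 : ‖mPoly (n + ε) m x y‖ ^ 2 ≤ (2 ^ (n + 1) * m.factorial * M ^ (n + 1 + m)) ^ 2 := by
      exact pow_le_pow_left₀ (norm_nonneg _) h1 2
    have h3 : ((2:ℝ) ^ (n + 1) * m.factorial * M ^ (n + 1 + m)) ^ 2 = C * (4 * M ^ 2) ^ n := by
      have h4 : (4:ℝ) ^ n = 2 ^ (n * 2) := by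
        rw [show (4:ℝ) = 2^2 by norm_num, ← pow_mul, mul_comm]
      rw [hCdef]
      ring_nf
      rw [h4]
    rw [div_le_iff₀ (by positivity : (0:ℝ) < (n.factorial : ℝ))] at *
    calc ‖mPoly (n + ε) m x y‖ ^ 2 ≤ C * (4 * M ^ 2) ^ n := h3 ▸ h2
      _ = C * ((4 * M ^ 2) ^ n / (n.factorial : ℝ)) * (n.factorial : ℝ) := by
          field_simp
  calc ∑ n ∈ Finset.range N, ‖mPoly (n + ε) m x y‖ ^ 2 / (n.factorial : ℝ)
      ≤ ∑ n ∈ Finset.range N, C * ((4 * M ^ 2) ^ n / (n.factorial : ℝ)) :=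
        Finset.sum_le_sum fun n _ => key n
    _ = C * ∑ n ∈ Finset.range N, (4 * M ^ 2) ^ n / (n.factorial : ℝ) := by
        rw [Finset.mul_sum]
    _ ≤ C * Real.exp (4 * M ^ 2) :=
        mul_le_mul_of_nonneg_left (Real.sum_le_exp_of_nonneg (by positivity) N) hC0

lemma miFact_eq_prod (η : MultiIndex) {W : Finset ℕ+} (hW : η.support ⊆ W) :
    (miFact η : ℝ) = ∏ i ∈ W, ((η i).factorial : ℝ) := by
  rw [miFact]
  push_cast
  refine Finset.prod_subset hW fun i _ hni => ?_
  rw [Finsupp.notMem_support_iff.mp hni]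
  simp

lemma miFact_pos (η : MultiIndex) : 0 < miFact η :=
  Finset.prod_pos fun i _ => Nat.factorial_pos _

lemma term_eq (ωp ωm : ℕ+ → ℂ) (ν η : MultiIndex) (k : ℕ+) (W : Finset ℕ+)
    (hWη : η.support ⊆ W) (hWν : ν.support ⊆ W) (hWk : k ∈ W) :
    ((η k : ℝ) + 1) * ‖vElem ωp ωm (η + Finsupp.single k 1) ν‖ ^ 2 =
      (1 / (miFact ν : ℝ)) *
        ∏ i ∈ W, ‖mPoly (η i + if k = i then 1 else 0) (ν i) (ωp i) (-ωm i)‖ ^ 2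
          / ((η i).factorial : ℝ) := by
  classical
  set μ : MultiIndex := η + Finsupp.single k 1 with hμ
  have hμs : μ.support ⊆ W := by
    refine Finsupp.support_add.trans (Finset.union_subset hWη ?_)
    exact (Finsupp.support_single_subset).trans (by simpa using hWk)
  -- extend the product in vElem to W
  have hprod : ∏ i ∈ μ.support ∪ ν.support, mPoly (μ i) (ν i) (ωp i) (-ωm i)
      = ∏ i ∈ W, mPoly (μ i) (ν i) (ωp i) (-ωm i) := by
    refine Finset.prod_subset (Finset.union_subset hμs hWν) fun i _ hni => ?_
    have h1 : μ i = 0 := Finsupp.notMem_support_iff.mp fun h => hni (Finset.mem_union_left _ h)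
    have h2 : ν i = 0 := Finsupp.notMem_support_iff.mp fun h => hni (Finset.mem_union_right _ h)
    rw [h1, h2, mPoly_zero_zero]
  have hq : (0:ℝ) < (miFact μ : ℝ) * (miFact ν : ℝ) := by
    have := miFact_pos μ; have := miFact_pos ν; positivity
  -- norm squared
  have hnorm : ‖vElem ωp ωm μ ν‖ ^ 2 =
      (1 / ((miFact μ : ℝ) * (miFact ν : ℝ))) *
        ∏ i ∈ W, ‖mPoly (μ i) (ν i) (ωp i) (-ωm i)‖ ^ 2 := by
    rw [vElem, hprod, norm_mul, Complex.norm_real, mul_pow, norm_prod, ← Finset.prod_pow]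
    congr 1
    rw [Real.norm_eq_abs, abs_of_nonneg (by positivity), div_pow, one_pow,
      Real.sq_sqrt hq.le]
  -- factorial identity
  have hμk : μ k = η k + 1 := by
    simp [hμ, Finsupp.add_apply, Finsupp.single_apply]
  have hμi : ∀ i ∈ W.erase k, μ i = η i := by
    intro i hi
    have : k ≠ i := fun h => (Finset.mem_erase.mp hi).1 h.symm
    simp [hμ, Finsupp.add_apply, Finsupp.single_apply, this]
  have hfacμ : (miFact μ : ℝ) = ((η k : ℝ) + 1) * ∏ i ∈ W, ((η i).factorial : ℝ) := by
    rw [miFact_eq_prod μ hμs, ← Finset.mul_prod_erase W _ hWk,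
      ← Finset.mul_prod_erase W (fun i => ((η i).factorial : ℝ)) hWk]
    rw [hμk, Nat.factorial_succ, Finset.prod_congr rfl fun i hi => by rw [hμi i hi]]
    push_cast
    ring
  have hμapp : ∀ i, μ i = η i + if k = i then 1 else 0 := by
    intro i; simp [hμ, Finsupp.add_apply, Finsupp.single_apply]
  rw [hnorm, hfacμ]
  rw [Finset.prod_div_distrib]
  rw [show (∏ i ∈ W, ‖mPoly (η i + if k = i then 1 else 0) (ν i) (ωp i) (-ωm i)‖ ^ 2)
      = ∏ i ∈ W, ‖mPoly (μ i) (ν i) (ωp i) (-ωm i)‖ ^ 2 from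
    Finset.prod_congr rfl fun i _ => by rw [hμapp i]]
  have hE : (0:ℝ) < ∏ i ∈ W, ((η i).factorial : ℝ) :=
    Finset.prod_pos fun i _ => by positivity
  have hν : (0:ℝ) < (miFact ν : ℝ) := by exact_mod_cast miFact_pos ν
  have hk1 : (0:ℝ) < (η k : ℝ) + 1 := by positivity
  field_simp

set_option maxHeartbeats 1000000 in
/-- If `∑_{i≥1}|ω_i|² < ∞`, then for every multi-index `ν` there is a constant `C ≥ 0`
such that uniformly in the positive integer `k`:
`∑_η (η_k + 1)·|v_{η+δ_k,ν}(ω)|² ≤ C`, where `δ_k` is the multi-index `1` at `k` and `0`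
elsewhere (equivalently, `‖a_k V(ω) e_ν‖ ≤ C^{1/2}·k^{1/2}`). -/
theorem stmt18 (ωp ωm : ℕ+ → ℂ) (hω : Summable fun i : ℕ+ => ‖ωp i‖ ^ 2)
    (ν : MultiIndex) :
    ∃ C : ℝ, 0 ≤ C ∧ ∀ k : ℕ+,
      Summable (fun η : MultiIndex =>
        ((η k : ℝ) + 1) * ‖vElem ωp ωm (η + Finsupp.single k 1) ν‖ ^ 2) ∧
      ∑' η : MultiIndex,
          ((η k : ℝ) + 1) * ‖vElem ωp ωm (η + Finsupp.single k 1) ν‖ ^ 2 ≤ C := by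
  classical
  set S : ℝ := ∑' i : ℕ+, ‖ωp i‖ ^ 2 with hSdef
  have hS0 : 0 ≤ S := tsum_nonneg fun i => by positivity
  have hxS : ∀ i : ℕ+, ‖ωp i‖ ^ 2 ≤ S := fun i =>
    Summable.le_tsum hω i fun j _ => by positivity
  set Mi : ℕ+ → ℝ := fun i => max (max ‖ωp i‖ ‖ωm i‖) 1 with hMidef
  set B : ℕ+ → ℝ := fun i =>
    4 * ((ν i).factorial : ℝ) ^ 2 * (Mi i) ^ (2 * (1 + ν i)) * Real.exp (4 * (Mi i) ^ 2)
    with hBdef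
  have hB0 : ∀ i, 0 ≤ B i := fun i => by
    have : (1:ℝ) ≤ Mi i := le_max_right _ _
    positivity
  have hνf : (0:ℝ) < (miFact ν : ℝ) := by exact_mod_cast miFact_pos ν
  refine ⟨(1 / (miFact ν : ℝ)) * ((∏ i ∈ ν.support, B i) * ((1 + S) * Real.exp S)),
    by positivity, fun k => ?_⟩
  set C : ℝ := (1 / (miFact ν : ℝ)) * ((∏ i ∈ ν.support, B i) * ((1 + S) * Real.exp S))
    with hCdef
  set f : MultiIndex → ℝ := fun η =>
    ((η k : ℝ) + 1) * ‖vElem ωp ωm (η + Finsupp.single k 1) ν‖ ^ 2 with hfdef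
  have hf0 : ∀ η, 0 ≤ f η := fun η => by positivity
  have key : ∀ u : Finset MultiIndex, ∑ η ∈ u, f η ≤ C := by
    intro u
    set W : Finset ℕ+ := (u.sup Finsupp.support ∪ ν.support) ∪ {k} with hWdef
    have hWη : ∀ η ∈ u, η.support ⊆ W := fun η hη =>
      subset_trans (Finset.le_sup hη)
        (subset_trans Finset.subset_union_left Finset.subset_union_left)
    have hWν : ν.support ⊆ W :=
      subset_trans Finset.subset_union_right Finset.subset_union_left
    have hWk : k ∈ W := Finset.mem_union_right _ (Finset.mem_singleton_self k)
    set N : ℕ := 1 + u.sup (fun η => η.sum fun _ n => n) with hNdef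
    have hN : ∀ η ∈ u, ∀ i, η i < N := by
      intro η hη i
      have h1 : η i ≤ η.sum fun _ n => n := by
        by_cases h : i ∈ η.support
        · exact Finset.single_le_sum (fun _ _ => Nat.zero_le _) h
        · simp [Finsupp.notMem_support_iff.mp h]
      have h2 : (η.sum fun _ n => n) ≤ u.sup fun η => η.sum fun _ n => n :=
        Finset.le_sup (f := fun η : MultiIndex => η.sum fun _ n => n) hη
      omega
    set g : ℕ+ → ℕ → ℝ := fun i n =>
      ‖mPoly (n + if k = i then 1 else 0) (ν i) (ωp i) (-ωm i)‖ ^ 2 / (n.factorial : ℝ)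
      with hgdef
    have hg0 : ∀ i n, 0 ≤ g i n := fun i n => by positivity
    -- step 1: each term
    have hterm : ∀ η ∈ u, f η = (1 / (miFact ν : ℝ)) * ∏ i ∈ W, g i (η i) := by
      intro η hη
      exact term_eq ωp ωm ν η k W (hWη η hη) hWν hWk
    -- step 2: sum over u bounded by product of column sums
    have hstep : ∑ η ∈ u, ∏ i ∈ W, g i (η i) ≤ ∏ i ∈ W, ∑ n ∈ Finset.range N, g i n := by
      set φ : MultiIndex → (↥W → ℕ) := fun η i => η (i : ℕ+) with hφdef
      have hinj : ∀ η₁ ∈ u, ∀ η₂ ∈ u, φ η₁ = φ η₂ → η₁ = η₂ := by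
        intro η₁ h1 η₂ h2 h
        ext i
        by_cases hi : i ∈ W
        · exact congrFun h ⟨i, hi⟩
        · rw [Finsupp.notMem_support_iff.mp fun hm => hi (hWη η₁ h1 hm),
            Finsupp.notMem_support_iff.mp fun hm => hi (hWη η₂ h2 hm)]
      have himg : ∀ η ∈ u, φ η ∈ Fintype.piFinset fun _ : ↥W => Finset.range N := by
        intro η hη
        rw [Fintype.mem_piFinset]
        exact fun i => Finset.mem_range.mpr (hN η hη i)
      calc ∑ η ∈ u, ∏ i ∈ W, g i (η i)
          = ∑ η ∈ u, ∏ i : ↥W, g i (η i) :=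
            Finset.sum_congr rfl fun η _ => (Finset.prod_coe_sort _ _).symm
        _ = ∑ p ∈ u.image φ, ∏ i : ↥W, g i (p i) :=
            (Finset.sum_image (f := fun p : ↥W → ℕ => ∏ i : ↥W, g i (p i)) hinj).symm
        _ ≤ ∑ p ∈ Fintype.piFinset (fun _ : ↥W => Finset.range N), ∏ i : ↥W, g i (p i) :=
            Finset.sum_le_sum_of_subset_of_nonneg
              (Finset.image_subset_iff.mpr himg)
              (fun p _ _ => Finset.prod_nonneg fun i _ => hg0 _ _)
        _ = ∏ i : ↥W, ∑ n ∈ Finset.range N, g i n := (Finset.prod_univ_sum _ _).symm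
        _ = ∏ i ∈ W, ∑ n ∈ Finset.range N, g i n :=
            Finset.prod_coe_sort W (fun i => ∑ n ∈ Finset.range N, g i n)
    -- step 3: bound the product of column sums
    have hSg0 : ∀ i, 0 ≤ ∑ n ∈ Finset.range N, g i n := fun i =>
      Finset.sum_nonneg fun n _ => hg0 i n
    have hBnu : ∀ i ∈ ν.support, ∑ n ∈ Finset.range N, g i n ≤ B i := by
      intro i _
      have h := g_sum_le (ν i) (ωp i) (-ωm i) (if k = i then 1 else 0)
        (by split <;> norm_num) N
      rw [norm_neg] at h
      simpa [hgdef, hBdef, hMidef] using h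
    have hout : ∀ i, i ∉ ν.support → i ≠ k →
        ∑ n ∈ Finset.range N, g i n ≤ Real.exp (‖ωp i‖ ^ 2) := by
      intro i hi hik
      have hν0 : ν i = 0 := Finsupp.notMem_support_iff.mp hi
      have hite : (if k = i then 1 else 0) = 0 := if_neg fun h => hik h.symm
      have hgi : ∀ n, g i n = (‖ωp i‖ ^ 2) ^ n / (n.factorial : ℝ) := by
        intro n
        simp only [hgdef, hite, hν0, Nat.add_zero, mPoly_zero_right, norm_pow]
        congr 1
        ring
      rw [Finset.sum_congr rfl fun n _ => hgi n]
      exact Real.sum_le_exp_of_nonneg (by positivity) N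
    have hkout : k ∉ ν.support →
        ∑ n ∈ Finset.range N, g k n ≤ S * Real.exp (‖ωp k‖ ^ 2) := by
      intro hk
      have hν0 : ν k = 0 := Finsupp.notMem_support_iff.mp hk
      have harg : ∀ n : ℕ, (n + if k = k then 1 else 0) = n + 1 := by simp
      have hgk : ∀ n, g k n = ‖ωp k‖ ^ 2 * ((‖ωp k‖ ^ 2) ^ n / (n.factorial : ℝ)) := by
        intro n
        simp only [hgdef, harg, hν0, mPoly_zero_right, norm_pow]
        rw [mul_div_assoc']
        congr 1
        simp only [if_true]
        ring
      rw [Finset.sum_congr rfl fun n _ => hgk n, ← Finset.mul_sum]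
      have h1 : ∑ n ∈ Finset.range N, (‖ωp k‖ ^ 2) ^ n / (n.factorial : ℝ)
          ≤ Real.exp (‖ωp k‖ ^ 2) := Real.sum_le_exp_of_nonneg (by positivity) N
      calc ‖ωp k‖ ^ 2 * ∑ n ∈ Finset.range N, (‖ωp k‖ ^ 2) ^ n / (n.factorial : ℝ)
          ≤ ‖ωp k‖ ^ 2 * Real.exp (‖ωp k‖ ^ 2) :=
            mul_le_mul_of_nonneg_left h1 (by positivity)
        _ ≤ S * Real.exp (‖ωp k‖ ^ 2) :=
            mul_le_mul_of_nonneg_right (hxS k) (Real.exp_nonneg _)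
    -- bound ∏ over W \ ν.support
    have hVsum : ∀ V : Finset ℕ+, ∑ i ∈ V, ‖ωp i‖ ^ 2 ≤ S := fun V =>
      Summable.sum_le_tsum V (fun i _ => by positivity) hω
    have hprodV : ∏ i ∈ W \ ν.support, ∑ n ∈ Finset.range N, g i n ≤ (1 + S) * Real.exp S := by
      by_cases hk : k ∈ W \ ν.support
      · rw [← Finset.mul_prod_erase _ _ hk]
        have hknu : k ∉ ν.support := (Finset.mem_sdiff.mp hk).2
        calc (∑ n ∈ Finset.range N, g k n) *
              ∏ i ∈ (W \ ν.support).erase k, ∑ n ∈ Finset.range N, g i n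
            ≤ (S * Real.exp (‖ωp k‖ ^ 2)) *
              ∏ i ∈ (W \ ν.support).erase k, Real.exp (‖ωp i‖ ^ 2) := by
              refine mul_le_mul (hkout hknu) ?_ (Finset.prod_nonneg fun i _ => hSg0 i)
                (by positivity)
              refine Finset.prod_le_prod (fun i _ => hSg0 i) fun i hi => ?_
              have hm := Finset.mem_erase.mp hi
              exact hout i (Finset.mem_sdiff.mp hm.2).2 hm.1
          _ = S * ∏ i ∈ W \ ν.support, Real.exp (‖ωp i‖ ^ 2) := by
              rw [← Finset.mul_prod_erase (W \ ν.support)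
                (fun i => Real.exp (‖ωp i‖ ^ 2)) hk]
              ring
          _ = S * Real.exp (∑ i ∈ W \ ν.support, ‖ωp i‖ ^ 2) := by
              rw [Real.exp_sum]
          _ ≤ (1 + S) * Real.exp S := by
              refine mul_le_mul (by linarith) (Real.exp_le_exp.mpr (hVsum _))
                (Real.exp_nonneg _) (by linarith)
      · calc ∏ i ∈ W \ ν.support, ∑ n ∈ Finset.range N, g i n
            ≤ ∏ i ∈ W \ ν.support, Real.exp (‖ωp i‖ ^ 2) := by
              refine Finset.prod_le_prod (fun i _ => hSg0 i) fun i hi => ?_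
              exact hout i (Finset.mem_sdiff.mp hi).2 (fun h => hk (h ▸ hi))
          _ = Real.exp (∑ i ∈ W \ ν.support, ‖ωp i‖ ^ 2) := by rw [Real.exp_sum]
          _ ≤ (1 + S) * Real.exp S := by
              calc Real.exp (∑ i ∈ W \ ν.support, ‖ωp i‖ ^ 2) ≤ Real.exp S :=
                    Real.exp_le_exp.mpr (hVsum _)
                _ ≤ (1 + S) * Real.exp S := by nlinarith [Real.exp_nonneg S]
    have hfinal : ∏ i ∈ W, ∑ n ∈ Finset.range N, g i n ≤
        (∏ i ∈ ν.support, B i) * ((1 + S) * Real.exp S) := by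
      rw [← Finset.prod_sdiff hWν]
      calc (∏ i ∈ W \ ν.support, ∑ n ∈ Finset.range N, g i n) *
            ∏ i ∈ ν.support, ∑ n ∈ Finset.range N, g i n
          ≤ ((1 + S) * Real.exp S) * ∏ i ∈ ν.support, B i := by
            refine mul_le_mul hprodV (Finset.prod_le_prod (fun i _ => hSg0 i) hBnu)
              (Finset.prod_nonneg fun i _ => hSg0 i) (by positivity)
        _ = (∏ i ∈ ν.support, B i) * ((1 + S) * Real.exp S) := by ring
    calc ∑ η ∈ u, f η = ∑ η ∈ u, (1 / (miFact ν : ℝ)) * ∏ i ∈ W, g i (η i) :=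
          Finset.sum_congr rfl hterm
      _ = (1 / (miFact ν : ℝ)) * ∑ η ∈ u, ∏ i ∈ W, g i (η i) := by
          rw [Finset.mul_sum]
      _ ≤ (1 / (miFact ν : ℝ)) * ∏ i ∈ W, ∑ n ∈ Finset.range N, g i n :=
          mul_le_mul_of_nonneg_left hstep (by positivity)
      _ ≤ C := by
          rw [hCdef]
          exact mul_le_mul_of_nonneg_left hfinal (by positivity)
  have hsummable : Summable f := summable_of_sum_le hf0 key
  exact ⟨hsummable, Summable.tsum_le_of_sum_le hsummable key⟩
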